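/- For every 3×3 real matrix F with det F > 0 and every 3×3 real matrix L, the map t ↦ σ_iso((I + tL)·F) is differentiable at t = 0, and its derivative σ̇ there satisfies σ̇ = L·σ_iso(F) + σ_iso(F)·Lᵀ − tr(L)·σ_iso(F) + D_iso(F) : e, where e = (L + Lᵀ)/2, (D_iso(F) : e)_{ij} = Σ_{k,l} D_iso(F)_{ijkl} e_{kl}, and D_iso(F)_{ijkl} = μ·J^(−5/3)·((2/9)·tr(b)·δ_{ij}δ_{kl} − (2/3)·(b_{ij}δ_{kl} + δ_{ij}b_{kl}) + (1/3)·tr(b)·(δ_{ik}δ_{lj} + δ_{il}δ_{jk})). -/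

import Mathlib

open Matrix

/-- Kronecker delta on `Fin 3`. -/
def kdelta (i j : Fin 3) : ℝ := if i = j then 1 else 0

/-- Isochoric part of the neo-Hookean Cauchy stress:
`σ_iso(F) = μ J^(−5/3) (b − tr(b)/3 · I)` with `J = det F`, `b = F Fᵀ`. -/
noncomputable def nhSigmaIso (μ : ℝ) (F : Matrix (Fin 3) (Fin 3) ℝ) :
    Matrix (Fin 3) (Fin 3) ℝ :=
  (μ * F.det ^ (-(5 : ℝ)/3)) •
    (F * Fᵀ - ((F * Fᵀ).trace / 3) • (1 : Matrix (Fin 3) (Fin 3) ℝ))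

/-- Isochoric part of the tangent stiffness tensor. -/
noncomputable def nhDIso (μ : ℝ) (F : Matrix (Fin 3) (Fin 3) ℝ) (i j k l : Fin 3) : ℝ :=
  μ * F.det ^ (-(5 : ℝ)/3) *
    ((2/9) * (F * Fᵀ).trace * kdelta i j * kdelta k l
      - (2/3) * ((F * Fᵀ) i j * kdelta k l + kdelta i j * (F * Fᵀ) k l)
      + (1/3) * (F * Fᵀ).trace * (kdelta i k * kdelta l j + kdelta i l * kdelta j k))

attribute [local instance] Matrix.normedAddCommGroup Matrix.normedSpace

/-!
Along `G t = (I + tL) F` we have `det G t = det (I + tL) · J`, whose derivative at `0` is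
`tr L · J` (Jacobi), and `b(t) = (I + tL) b (I + tL)ᵀ` is quadratic in `t` with linear term
`L b + b Lᵀ`. Hence the rate of `σ_iso = μ J^(-5/3) dev b` is
`-(5/3) tr L · σ_iso + μ J^(-5/3) dev (L b + b Lᵀ)`. Contracting `D_iso` with `e` in closed form,
and using `b : e = tr (L b)` because `b` is symmetric, the claimed right-hand side reduces to the
same matrix.
-/

theorem hasDerivAt_add_smul_add_sq_smul {𝕜 E : Type*} [NontriviallyNormedField 𝕜]
    [NormedAddCommGroup E] [NormedSpace 𝕜 E] (A V W : E) :
    HasDerivAt (fun t : 𝕜 => A + t • V + t ^ 2 • W) V 0 := by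
  convert (((hasDerivAt_id (0 : 𝕜)).smul_const V).const_add A).add
    ((hasDerivAt_pow 2 (0 : 𝕜)).smul_const W) using 1
  · rfl
  · simp

namespace Matrix

variable {n : Type*}

theorem half_smul_add_transpose_add_transpose (L : Matrix n n ℝ) :
    (1 / 2 : ℝ) • (L + Lᵀ) + ((1 / 2 : ℝ) • (L + Lᵀ))ᵀ = L + Lᵀ := by
  rw [transpose_smul, transpose_add, transpose_transpose, add_comm Lᵀ, ← two_smul ℝ, smul_smul]
  norm_num

variable [Fintype n]

theorem trace_mul_transpose_of_isSymm {R : Type*} [CommSemiring R] {B : Matrix n n R}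
    (hB : B.IsSymm) (L : Matrix n n R) : (B * Lᵀ).trace = (L * B).trace := by
  rw [← trace_transpose, transpose_mul, transpose_transpose, hB.eq]

theorem trace_half_smul_add_transpose (L : Matrix n n ℝ) :
    ((1 / 2 : ℝ) • (L + Lᵀ)).trace = L.trace := by
  simp only [trace_smul, trace_add, trace_transpose, smul_eq_mul]
  ring

theorem sum_mul_half_smul_add_transpose_of_isSymm {B : Matrix n n ℝ} (hB : B.IsSymm)
    (L : Matrix n n ℝ) : ∑ k, ∑ l, B k l * ((1 / 2 : ℝ) • (L + Lᵀ)) k l = (L * B).trace := by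
  have hfrob : ∑ k, ∑ l, B k l * ((1 / 2 : ℝ) • (L + Lᵀ)) k l
      = (Bᵀ * ((1 / 2 : ℝ) • (L + Lᵀ))).trace := by
    simp only [trace, diag, mul_apply, transpose_apply]
    exact Finset.sum_comm
  rw [hfrob, hB.eq, mul_smul_comm, mul_add, trace_smul, trace_add, trace_mul_comm B L,
    trace_mul_transpose_of_isSymm hB, smul_eq_mul]
  ring

variable [DecidableEq n]

theorem hasDerivAt_det_one_add_smul {𝕜 : Type*} [NontriviallyNormedField 𝕜] (L : Matrix n n 𝕜) :
    HasDerivAt (fun t : 𝕜 => (1 + t • L).det) L.trace 0 := by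
  have h := (((hasDerivAt_id (0 : 𝕜)).const_mul L.trace).const_add 1).add
    ((Polynomial.hasDerivAt (det (1 + (Polynomial.X : Polynomial 𝕜) • L.map Polynomial.C)).divX.divX
      0).mul (hasDerivAt_pow 2 (0 : 𝕜)))
  exact (h.congr_deriv (by simp)).congr_of_eventuallyEq
    (.of_forall fun t => det_one_add_smul t L)

theorem hasDerivAt_det_one_add_smul_mul_rpow (L F : Matrix n n ℝ) (p : ℝ) (hF : F.det ≠ 0) :
    HasDerivAt (fun t : ℝ => ((1 + t • L) * F).det ^ p) (p * L.trace * F.det ^ p) 0 := by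
  have hdet : HasDerivAt (fun t : ℝ => ((1 + t • L) * F).det) (L.trace * F.det) 0 := by
    simp_rw [det_mul]
    exact (hasDerivAt_det_one_add_smul L).mul_const F.det
  refine (hdet.rpow_const (.inl (by simpa using hF))).congr_deriv ?_
  rw [zero_smul, add_zero, one_mul, Real.rpow_sub_one hF]
  field_simp

theorem one_add_smul_mul_mul_transpose {R : Type*} [CommRing R] (t : R) (L B : Matrix n n R) :
    (1 + t • L) * B * (1 + t • L)ᵀ = B + t • (L * B + B * Lᵀ) + t ^ 2 • (L * B * Lᵀ) := by
  simp only [transpose_add, transpose_one, transpose_smul, add_mul, mul_add, one_mul, mul_one,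
    smul_mul_assoc, mul_smul_comm, smul_add, pow_two, mul_smul]
  abel

end Matrix

noncomputable def deviator (A : Matrix (Fin 3) (Fin 3) ℝ) : Matrix (Fin 3) (Fin 3) ℝ :=
  A - (A.trace / 3) • 1

theorem deviator_add (A B : Matrix (Fin 3) (Fin 3) ℝ) :
    deviator (A + B) = deviator A + deviator B := by
  simp only [deviator, trace_add, add_div, add_smul]
  abel

theorem deviator_smul (c : ℝ) (A : Matrix (Fin 3) (Fin 3) ℝ) :
    deviator (c • A) = c • deviator A := by
  simp only [deviator, trace_smul, smul_eq_mul, smul_sub, smul_smul, mul_div_assoc]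

theorem hasDerivAt_deviator_one_add_smul_mul (L F : Matrix (Fin 3) (Fin 3) ℝ) :
    HasDerivAt (fun t : ℝ => deviator ((1 + t • L) * F * ((1 + t • L) * F)ᵀ))
      (deviator (L * (F * Fᵀ) + F * Fᵀ * Lᵀ)) 0 := by
  have hb (t : ℝ) : deviator ((1 + t • L) * F * ((1 + t • L) * F)ᵀ) = deviator (F * Fᵀ)
      + t • deviator (L * (F * Fᵀ) + F * Fᵀ * Lᵀ) + t ^ 2 • deviator (L * (F * Fᵀ) * Lᵀ) := by
    rw [transpose_mul, ← mul_assoc, mul_assoc _ F, one_add_smul_mul_mul_transpose, deviator_add,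
      deviator_add, deviator_smul, deviator_smul]
  simp_rw [hb]
  exact hasDerivAt_add_smul_add_sq_smul (𝕜 := ℝ) (E := Matrix (Fin 3) (Fin 3) ℝ) _ _ _

theorem nhSigmaIso_eq_smul_deviator (μ : ℝ) (F : Matrix (Fin 3) (Fin 3) ℝ) :
    nhSigmaIso μ F = (μ * F.det ^ (-(5 : ℝ) / 3)) • deviator (F * Fᵀ) := rfl

theorem nhDIso_contract (μ : ℝ) (F E : Matrix (Fin 3) (Fin 3) ℝ) :
    (Matrix.of fun i j => ∑ k, ∑ l, nhDIso μ F i j k l * E k l) =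
      (μ * F.det ^ (-(5 : ℝ) / 3)) •
        (((2 / 9) * (F * Fᵀ).trace * E.trace) • 1
          - (2 / 3 : ℝ) • (E.trace • (F * Fᵀ) + (∑ k, ∑ l, (F * Fᵀ) k l * E k l) • 1)
          + ((1 / 3) * (F * Fᵀ).trace) • (E + Eᵀ)) := by
  ext i j
  simp only [nhDIso, kdelta, of_apply, Matrix.smul_apply, Matrix.add_apply, Matrix.sub_apply,
    one_apply, transpose_apply, smul_eq_mul, trace, diag]
  simp only [mul_add, add_mul, mul_sub, sub_mul, Finset.sum_add_distrib, Finset.sum_sub_distrib,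
    mul_ite, ite_mul, mul_one, mul_zero, zero_mul, one_mul, Finset.sum_ite_eq, Finset.sum_ite_eq',
    Finset.mem_univ, if_true, Finset.sum_ite_irrel, Finset.sum_const_zero]
  split_ifs <;> simp only [Fin.sum_univ_three] <;> ring

theorem truesdell_rate_eq (c : ℝ) {B L E : Matrix (Fin 3) (Fin 3) ℝ} (hB : B.IsSymm)
    (hE_trace : E.trace = L.trace) (hE_add_transpose : E + Eᵀ = L + Lᵀ)
    (hBE : ∑ k, ∑ l, B k l * E k l = (L * B).trace) :
    L * (c • deviator B) + (c • deviator B) * Lᵀ - L.trace • (c • deviator B)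
      + c • (((2 / 9) * B.trace * E.trace) • 1
          - (2 / 3 : ℝ) • (E.trace • B + (∑ k, ∑ l, B k l * E k l) • 1)
          + ((1 / 3) * B.trace) • (E + Eᵀ)) =
    c • deviator (L * B + B * Lᵀ) + (-(5 : ℝ) / 3 * L.trace * c) • deviator B := by
  rw [hE_trace, hE_add_transpose, hBE]
  simp only [deviator, trace_add, trace_mul_transpose_of_isSymm hB, mul_sub, sub_mul,
    mul_smul_comm, smul_mul_assoc, mul_one, one_mul, smul_sub, smul_add]
  module

/-- the map `t ↦ σ_iso((I + tL)·F)` is differentiable at `t = 0` and its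
derivative there equals `L·σ_iso + σ_iso·Lᵀ − tr(L)·σ_iso + D_iso(F) : e`,
with `e = (L + Lᵀ)/2`. -/
theorem nhSigmaIso_truesdell_rate (μ : ℝ) (F L : Matrix (Fin 3) (Fin 3) ℝ)
    (hF : 0 < F.det) :
    HasDerivAt (fun t : ℝ => nhSigmaIso μ ((1 + t • L) * F))
      (L * nhSigmaIso μ F + nhSigmaIso μ F * Lᵀ - L.trace • nhSigmaIso μ F
        + Matrix.of fun i j =>
            ∑ k, ∑ l, nhDIso μ F i j k l * (((1 : ℝ)/2) • (L + Lᵀ)) k l) 0 := by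
  have hc : HasDerivAt (fun t : ℝ => μ * ((1 + t • L) * F).det ^ (-(5 : ℝ) / 3))
      (-(5 : ℝ) / 3 * L.trace * (μ * F.det ^ (-(5 : ℝ) / 3))) 0 :=
    ((hasDerivAt_det_one_add_smul_mul_rpow L F _ hF.ne').const_mul μ).congr_deriv (by ring)
  have hσ := hc.smul (hasDerivAt_deviator_one_add_smul_mul L F)
  simp only [zero_smul, add_zero, one_mul] at hσ
  have hb := isSymm_mul_transpose_self F
  rw [nhDIso_contract, nhSigmaIso_eq_smul_deviator,
    truesdell_rate_eq _ hb (trace_half_smul_add_transpose L)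
      (half_smul_add_transpose_add_transpose L) (sum_mul_half_smul_add_transpose_of_isSymm hb L)]
  exact hσ
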